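/- Let M be an N-function with complementary N-function N, and assume the Boyd indices α_M and β_M of M exist. Then the following are equivalent: (i) both M and N satisfy the Δ₂-condition; (ii) 0 < α_M ≤ β_M < 1. -/

import Mathlib

open MeasureTheory Filter Topology Set

noncomputable section

/-- ℝⁿ with its Euclidean structure. -/
abbrev En (n : ℕ) := EuclideanSpace ℝ (Fin n)

/-- `M` is an N-function (Young function): continuous, convex, even, with
`M u / u → 0` as `u → 0` and `M u / u → ∞` as `u → ∞`. -/
def IsNFunction (M : ℝ → ℝ) : Prop :=
  Continuous M ∧ ConvexOn ℝ Set.univ M ∧ (∀ u, M (-u) = M u) ∧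
  Filter.Tendsto (fun u => M u / u) (𝓝[≠] (0:ℝ)) (𝓝 0) ∧
  Filter.Tendsto (fun u => M u / u) Filter.atTop Filter.atTop

/-- The complementary N-function `N v = sup_{u ≥ 0} (u·|v| − M u)`. -/
def complementaryN (M : ℝ → ℝ) (v : ℝ) : ℝ :=
  sSup ((fun u => u * |v| - M u) '' Set.Ici (0:ℝ))

/-- The set of numbers `|∫_Ω f·v|` over measurable `v` with `∫_Ω W(|v|) ≤ 1`;
the Orlicz norm `‖f‖_{L_M(Ω)}` is its supremum, where `W` is the N-function
complementary to `M`. -/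
def orliczSet (n : ℕ) (W : ℝ → ℝ) (Ω : Set (En n)) (f : En n → ℝ) : Set ℝ :=
  (fun v : En n → ℝ => |∫ x in Ω, f x * v x|) ''
    {v | Measurable v ∧ (∫ x in Ω, W (|v x|)) ≤ 1}

/-- The Orlicz norm `‖f‖_{L_M(Ω)}` (with `W` the complementary N-function of `M`). -/
def orliczNorm (n : ℕ) (W : ℝ → ℝ) (Ω : Set (En n)) (f : En n → ℝ) : ℝ :=
  sSup (orliczSet n W Ω f)

/-- The Δ₂-condition for large values of `u`. -/
def Delta2 (M : ℝ → ℝ) : Prop :=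
  ∃ k > (0:ℝ), ∃ u₀ ≥ (0:ℝ), ∀ u ≥ u₀, M (2 * u) ≤ k * M u

/-- The cube `Q_d = [−d/2, d/2]ⁿ`. -/
def QCube (n : ℕ) (d : ℝ) : Set (En n) :=
  {x | ∀ i, x i ∈ Set.Icc (-(d/2)) (d/2)}

/-- `f` is periodic with period `d` in each of the `n` coordinates. -/
def DPeriodic (n : ℕ) (d : ℝ) (f : En n → ℝ) : Prop :=
  ∀ (x : En n) (i : Fin n), f (x + EuclideanSpace.single i d) = f x

/-- First-order partial derivative `∂ᵢ`. -/
def partialD (n : ℕ) (i : Fin n) (f : En n → ℝ) : En n → ℝ :=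
  fun x => fderiv ℝ f x (EuclideanSpace.single i 1)

/-- `∂^p = ∂₁^{p₁} ⋯ ∂ₙ^{pₙ}` for a multi-index `p`. -/
def multiD (n : ℕ) (p : Fin n → ℕ) (f : En n → ℝ) : En n → ℝ :=
  (List.finRange n).foldr (fun i g => (partialD n i)^[p i] g) f

/-- Multi-indices `p` with `|p| = m`. -/
def idxEq (n m : ℕ) : Finset (Fin n → ℕ) :=
  (Finset.Icc (fun _ => 0) (fun _ => m)).filter (fun p => ∑ i, p i = m)

/-- Multi-indices `p` with `|p| ≤ m`. -/
def idxLe (n m : ℕ) : Finset (Fin n → ℕ) :=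
  (Finset.Icc (fun _ => 0) (fun _ => m)).filter (fun p => ∑ i, p i ≤ m)

/-- Multi-indices `p` with `|p| < m`. -/
def idxLt (n m : ℕ) : Finset (Fin n → ℕ) :=
  (Finset.Icc (fun _ => 0) (fun _ => m)).filter (fun p => ∑ i, p i < m)

/-- Right-continuous generalized inverse `M⁻¹ x = sup {u ≥ 0 : M u ≤ x}`. -/
def geninv (M : ℝ → ℝ) (x : ℝ) : ℝ := sSup {u : ℝ | 0 ≤ u ∧ M u ≤ x}

/-- `h(t) = limsup_{x → ∞} M⁻¹(x) / M⁻¹(t·x)`. -/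
def boydH (M : ℝ → ℝ) (t : ℝ) : ℝ :=
  Filter.limsup (fun x => geninv M x / geninv M (t * x)) Filter.atTop

/-- `M` has (upper and lower) Boyd indices `α = lim_{t→∞} −log h(t)/log t` and
`β = lim_{t→0⁺} −log h(t)/log t`. -/
def HasBoydIndices (M : ℝ → ℝ) (α β : ℝ) : Prop :=
  Filter.Tendsto (fun t => -(Real.log (boydH M t)) / Real.log t) Filter.atTop (𝓝 α) ∧
  Filter.Tendsto (fun t => -(Real.log (boydH M t)) / Real.log t) (𝓝[>] (0:ℝ)) (𝓝 β)

/-- `g` is the weak (Sobolev) derivative `∂^p u` on `Ω`. -/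
def IsWeakDeriv (n : ℕ) (Ω : Set (En n)) (p : Fin n → ℕ) (u g : En n → ℝ) : Prop :=
  ∀ φ : En n → ℝ, ContDiff ℝ (⊤ : ℕ∞) φ → HasCompactSupport φ → tsupport φ ⊆ Ω →
    ∫ x in Ω, u x * multiD n p φ x = (-1 : ℝ) ^ (∑ i, p i) * ∫ x in Ω, g x * φ x

namespace BoydAux

variable {M : ℝ → ℝ}



lemma nf_zero (hM : IsNFunction M) : M 0 = 0 := by
  obtain ⟨hC, -, -, h0, -⟩ := hM
  by_contra hne
  have h0' : Tendsto (fun u => M u / u) (𝓝[>] (0:ℝ)) (𝓝 0) :=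
    h0.mono_left (nhdsWithin_mono _ (fun x hx => ne_of_gt hx))
  have habs : Tendsto (fun u => |M u / u|) (𝓝[>] (0:ℝ)) (𝓝 0) := by
    have := h0'.abs; simpa using this
  have hM0 : Tendsto (fun u => |M u|) (𝓝[>] (0:ℝ)) (𝓝 |M 0|) :=
    ((hC.abs).tendsto 0).mono_left nhdsWithin_le_nhds
  have hinv : Tendsto (fun u : ℝ => u⁻¹) (𝓝[>] (0:ℝ)) atTop := tendsto_inv_nhdsGT_zero
  have hprod : Tendsto (fun u => |M u| * u⁻¹) (𝓝[>] (0:ℝ)) atTop :=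
    hM0.pos_mul_atTop (abs_pos.2 hne) hinv
  have heq : ∀ᶠ u in 𝓝[>] (0:ℝ), |M u| * u⁻¹ = |M u / u| := by
    filter_upwards [self_mem_nhdsWithin] with u (hu : 0 < u)
    rw [abs_div, abs_of_pos hu, div_eq_mul_inv]
  have hprod' : Tendsto (fun u => |M u / u|) (𝓝[>] (0:ℝ)) atTop :=
    Tendsto.congr' heq hprod
  have h1 : ∀ᶠ u in 𝓝[>] (0:ℝ), (1:ℝ) ≤ |M u / u| := hprod'.eventually_ge_atTop 1
  have h2 : ∀ᶠ u in 𝓝[>] (0:ℝ), |M u / u| < 1 := habs.eventually_lt_const one_pos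
  obtain ⟨u, hu1, hu2⟩ := (h1.and h2).exists
  linarith

lemma nf_nonneg (hM : IsNFunction M) (u : ℝ) : 0 ≤ M u := by
  have hconv := hM.2.1
  have heven := hM.2.2.1
  have := hconv.2 (mem_univ u) (mem_univ (-u)) (by norm_num : (0:ℝ) ≤ 1/2)
    (by norm_num : (0:ℝ) ≤ 1/2) (by norm_num)
  have h2 : (1/2 : ℝ) • u + (1/2 : ℝ) • (-u) = 0 := by
    rw [smul_eq_mul, smul_eq_mul]; ring
  rw [h2, nf_zero hM, heven u] at this
  simp only [smul_eq_mul] at this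
  linarith

lemma nf_slope (hM : IsNFunction M) {a b : ℝ} (ha : 0 ≤ a) (hab : a ≤ b) (hb : 0 < b) :
    M a ≤ (a / b) * M b := by
  have hconv := hM.2.1
  have hq0 : 0 ≤ a / b := div_nonneg ha hb.le
  have hq1 : a / b ≤ 1 := (div_le_one hb).2 hab
  have := hconv.2 (mem_univ (0:ℝ)) (mem_univ b) (by linarith : (0:ℝ) ≤ 1 - a/b) hq0 (by ring)
  have h2 : (1 - a/b) • (0:ℝ) + (a/b) • b = a := by
    rw [smul_eq_mul, smul_eq_mul]; field_simp; ring
  rw [h2, nf_zero hM] at this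
  simpa using this

lemma nf_mono (hM : IsNFunction M) {a b : ℝ} (ha : 0 ≤ a) (hab : a ≤ b) : M a ≤ M b := by
  rcases eq_or_lt_of_le (ha.trans hab) with hb | hb
  · have : a = b := le_antisymm hab (by rw [← hb] at *; linarith)
    rw [this]
  · calc M a ≤ (a/b) * M b := nf_slope hM ha hab hb
      _ ≤ 1 * M b := by
          apply mul_le_mul_of_nonneg_right ((div_le_one hb).2 hab) (nf_nonneg hM b)
      _ = M b := one_mul _

lemma nf_strict (hM : IsNFunction M) {a b : ℝ} (ha : 0 ≤ a) (hab : a < b) (hMb : 0 < M b) :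
    M a < M b := by
  have hb : 0 < b := lt_of_le_of_lt ha hab
  calc M a ≤ (a/b) * M b := nf_slope hM ha hab.le hb
    _ < 1 * M b := by
        apply mul_lt_mul_of_pos_right ((div_lt_one hb).2 hab) hMb
    _ = M b := one_mul _

lemma nf_superhom (hM : IsNFunction M) {c u : ℝ} (hc : 1 ≤ c) (hu : 0 ≤ u) :
    c * M u ≤ M (c * u) := by
  rcases eq_or_lt_of_le hu with hu0 | hu0
  · rw [← hu0, mul_zero, nf_zero hM, mul_zero]
  · have hcu : 0 < c * u := mul_pos (lt_of_lt_of_le one_pos hc) hu0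
    have := nf_slope hM hu0.le (le_mul_of_one_le_left hu0.le hc) hcu
    have hc0 : 0 < c := lt_of_lt_of_le one_pos hc
    rw [div_mul_eq_mul_div, mul_comm] at this
    calc c * M u ≤ c * ((c * u) * M (c*u) / (c * u) / c) := by
          rw [mul_div_assoc] at this
          have : M u ≤ M (c*u) * u / (c * u) := by
            have h := nf_slope hM hu0.le (le_mul_of_one_le_left hu0.le hc) hcu
            calc M u ≤ (u / (c*u)) * M (c*u) := h
              _ = M (c*u) * u / (c*u) := by ring
          calc c * M u ≤ c * (M (c*u) * u / (c*u)) := by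
                exact mul_le_mul_of_nonneg_left this hc0.le
            _ = c * ((c * u) * M (c*u) / (c * u) / c) := by field_simp
      _ = M (c * u) := by field_simp

lemma nf_tendsto (hM : IsNFunction M) : Tendsto M atTop atTop := by
  have hinf := hM.2.2.2.2
  have h1 : ∀ᶠ u in atTop, u ≤ M u := by
    filter_upwards [hinf.eventually_ge_atTop 1, eventually_gt_atTop (0:ℝ)] with u h hu
    have := (le_div_iff₀ hu).1 h
    linarith
  exact tendsto_atTop_mono' _ h1 tendsto_id

lemma gset_nonempty (hM : IsNFunction M) {x : ℝ} (hx : 0 ≤ x) :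
    {u : ℝ | 0 ≤ u ∧ M u ≤ x}.Nonempty :=
  ⟨0, le_refl 0, by rw [nf_zero hM]; exact hx⟩

lemma gset_bdd (hM : IsNFunction M) (x : ℝ) : BddAbove {u : ℝ | 0 ≤ u ∧ M u ≤ x} := by
  obtain ⟨u₁, hu₁⟩ := (nf_tendsto hM).eventually_gt_atTop x |>.exists_forall_of_atTop
  refine ⟨u₁, fun u hu => ?_⟩
  by_contra hc
  push_neg at hc
  exact absurd hu.2 (not_le.2 (hu₁ u hc.le))

lemma geninv_nonneg (M : ℝ → ℝ) (x : ℝ) : 0 ≤ geninv M x :=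
  Real.sSup_nonneg (fun u hu => hu.1)

lemma geninv_mem (hM : IsNFunction M) {x : ℝ} (hx : 0 ≤ x) :
    0 ≤ geninv M x ∧ M (geninv M x) ≤ x := by
  have hcl : IsClosed {u : ℝ | 0 ≤ u ∧ M u ≤ x} := by
    have heq : {u : ℝ | 0 ≤ u ∧ M u ≤ x} = Ici (0:ℝ) ∩ M ⁻¹' (Iic x) := rfl
    rw [heq]
    exact isClosed_Ici.inter (isClosed_Iic.preimage hM.1)
  have hcp : IsCompact {u : ℝ | 0 ≤ u ∧ M u ≤ x} :=
    Metric.isCompact_of_isClosed_isBounded hcl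
      (BddBelow.isBounded ⟨0, fun u hu => hu.1⟩ (gset_bdd hM x))
  exact hcp.sSup_mem (gset_nonempty hM hx)

lemma map_geninv (hM : IsNFunction M) {x : ℝ} (hx : 0 ≤ x) : M (geninv M x) = x := by
  obtain ⟨hg0, hgle⟩ := geninv_mem hM hx
  rcases eq_or_lt_of_le hgle with h | h
  · exact h
  · exfalso
    have hopen : IsOpen (M ⁻¹' (Iio x)) := (isOpen_Iio).preimage hM.1
    have hmem : geninv M x ∈ M ⁻¹' (Iio x) := h
    obtain ⟨ε, hε, hball⟩ := Metric.isOpen_iff.1 hopen _ hmem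
    have hin : geninv M x + ε/2 ∈ M ⁻¹' (Iio x) := by
      apply hball
      rw [Metric.mem_ball, Real.dist_eq]
      have he : geninv M x + ε/2 - geninv M x = ε/2 := by ring
      rw [he, abs_of_pos (by linarith)]
      linarith
    have : geninv M x + ε/2 ≤ geninv M x :=
      le_csSup (gset_bdd hM x) ⟨by linarith, le_of_lt hin⟩
    linarith

lemma le_geninv (hM : IsNFunction M) {u x : ℝ} (hu : 0 ≤ u) (h : M u ≤ x) :
    u ≤ geninv M x :=
  le_csSup (gset_bdd hM x) ⟨hu, h⟩

lemma geninv_le (hM : IsNFunction M) {u x : ℝ} (hu : 0 ≤ u) (hx : 0 < x) (h : x ≤ M u) :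
    geninv M x ≤ u := by
  by_contra hc
  push_neg at hc
  have := nf_strict hM hu hc (by rw [map_geninv hM hx.le]; exact hx)
  rw [map_geninv hM hx.le] at this
  linarith

lemma geninv_pos (hM : IsNFunction M) {x : ℝ} (hx : 0 < x) : 0 < geninv M x := by
  have hcont : ContinuousAt M 0 := hM.1.continuousAt
  have : ∀ᶠ u in 𝓝 (0:ℝ), M u < x := by
    have := hcont.eventually_lt_const (by rw [nf_zero hM]; exact hx)
    exact this
  obtain ⟨ε, hε, hball⟩ := Metric.eventually_nhds_iff.1 this
  have hin : M (ε/2) < x := by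
    apply hball
    rw [Real.dist_eq]
    have he : ε/2 - 0 = ε/2 := by ring
    rw [he, abs_of_pos (by linarith)]
    linarith
  have := le_geninv hM (by linarith : (0:ℝ) ≤ ε/2) hin.le
  linarith

lemma geninv_mono (hM : IsNFunction M) {x y : ℝ} (hx : 0 ≤ x) (hxy : x ≤ y) :
    geninv M x ≤ geninv M y :=
  csSup_le_csSup (gset_bdd hM y) (gset_nonempty hM hx)
    (fun u hu => ⟨hu.1, hu.2.trans hxy⟩)

lemma geninv_map (hM : IsNFunction M) {u : ℝ} (hu : 0 ≤ u) (hMu : 0 < M u) :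
    geninv M (M u) = u :=
  le_antisymm (geninv_le hM hu hMu (le_refl _)) (le_geninv hM hu (le_refl _))

lemma geninv_scale (hM : IsNFunction M) {t x : ℝ} (ht : 1 ≤ t) (hx : 0 ≤ x) :
    geninv M (t * x) ≤ t * geninv M x := by
  rcases eq_or_lt_of_le hx with hx0 | hx0
  · rw [← hx0, mul_zero]
    exact le_mul_of_one_le_left (geninv_nonneg M 0) ht
  · have hg := geninv_pos hM hx0
    have hkey : t * x ≤ M (t * geninv M x) := by
      calc t * x = t * M (geninv M x) := by rw [map_geninv hM hx]
        _ ≤ M (t * geninv M x) := nf_superhom hM ht (geninv_nonneg M x)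
    exact geninv_le hM (by positivity) (by positivity) hkey

lemma geninv_tendsto (hM : IsNFunction M) : Tendsto (geninv M) atTop atTop := by
  apply tendsto_atTop.2
  intro b
  filter_upwards [eventually_ge_atTop (M (max b 0))] with x hx
  calc b ≤ max b 0 := le_max_left _ _
    _ ≤ geninv M x := le_geninv hM (le_max_right _ _) hx

lemma ratio_nonneg (M : ℝ → ℝ) (t x : ℝ) : 0 ≤ geninv M x / geninv M (t * x) :=
  div_nonneg (geninv_nonneg M x) (geninv_nonneg M (t*x))

lemma ratio_cobdd (M : ℝ → ℝ) (t : ℝ) :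
    IsCoboundedUnder (· ≤ ·) atTop (fun x => geninv M x / geninv M (t * x)) :=
  IsCoboundedUnder.of_frequently_ge
    ((Eventually.of_forall (fun x => ratio_nonneg M t x)).frequently)

lemma ratio_bdd (hM : IsNFunction M) {t : ℝ} (ht : 0 < t) :
    IsBoundedUnder (· ≤ ·) atTop (fun x => geninv M x / geninv M (t * x)) := by
  apply isBoundedUnder_of_eventually_le (a := max 1 t⁻¹)
  filter_upwards [eventually_ge_atTop (1:ℝ)] with x hx
  have hx0 : 0 < x := lt_of_lt_of_le one_pos hx
  have hgtx : 0 < geninv M (t * x) := geninv_pos hM (mul_pos ht hx0)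
  rcases le_or_gt 1 t with h1 | h1
  · have hm : geninv M x ≤ geninv M (t * x) :=
      geninv_mono hM hx0.le (le_mul_of_one_le_left hx0.le h1)
    calc geninv M x / geninv M (t*x) ≤ 1 := (div_le_one hgtx).2 hm
      _ ≤ max 1 t⁻¹ := le_max_left _ _
  · have hinv : 1 ≤ t⁻¹ := (one_le_inv₀ ht).2 h1.le
    have hsc : geninv M x ≤ t⁻¹ * geninv M (t * x) := by
      have := geninv_scale hM (t := t⁻¹) (x := t * x) hinv (by positivity)
      have heq : t⁻¹ * (t * x) = x := by field_simp
      rw [heq] at this; exact this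
    calc geninv M x / geninv M (t*x) ≤ t⁻¹ := (div_le_iff₀ hgtx).2 (by linarith)
      _ ≤ max 1 t⁻¹ := le_max_right _ _

lemma min_le_boydH (hM : IsNFunction M) {t : ℝ} (ht : 0 < t) :
    min 1 t⁻¹ ≤ boydH M t := by
  apply le_limsup_of_frequently_le _ (ratio_bdd hM ht)
  apply Eventually.frequently
  filter_upwards [eventually_ge_atTop (1:ℝ)] with x hx
  have hx0 : 0 < x := lt_of_lt_of_le one_pos hx
  have hgtx : 0 < geninv M (t * x) := geninv_pos hM (mul_pos ht hx0)
  rcases le_or_gt t 1 with h1 | h1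
  · have hm : geninv M (t * x) ≤ geninv M x :=
      geninv_mono hM (by positivity) (mul_le_of_le_one_left hx0.le h1)
    calc min 1 t⁻¹ ≤ 1 := min_le_left _ _
      _ ≤ geninv M x / geninv M (t*x) := (one_le_div hgtx).2 hm
  · have hsc : geninv M (t * x) ≤ t * geninv M x := geninv_scale hM h1.le hx0.le
    calc min 1 t⁻¹ ≤ t⁻¹ := min_le_right _ _
      _ ≤ geninv M x / geninv M (t*x) := by
          rw [le_div_iff₀ hgtx, inv_mul_eq_div, div_le_iff₀ (lt_trans one_pos h1)]
          linarith [hsc]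

lemma boydH_pos (hM : IsNFunction M) {t : ℝ} (ht : 0 < t) : 0 < boydH M t :=
  lt_of_lt_of_le (lt_min one_pos (inv_pos.2 ht)) (min_le_boydH hM ht)

lemma boydH_le_of_eventually {t c : ℝ}
    (h : ∀ᶠ x in atTop, geninv M x / geninv M (t * x) ≤ c) : boydH M t ≤ c :=
  limsup_le_of_le (ratio_cobdd M t) h

lemma eventually_ratio_lt (hM : IsNFunction M) {t c : ℝ} (ht : 0 < t) (h : boydH M t < c) :
    ∀ᶠ x in atTop, geninv M x / geninv M (t * x) < c :=
  eventually_lt_of_limsup_lt h (ratio_bdd hM ht)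

lemma boydH_submul (hM : IsNFunction M) {s t : ℝ} (hs : 0 < s) (ht : 0 < t) :
    boydH M (s * t) ≤ boydH M s * boydH M t := by
  set A := boydH M s with hA
  set B := boydH M t with hB
  have hA0 : 0 < A := boydH_pos hM hs
  have hB0 : 0 < B := boydH_pos hM ht
  have key : ∀ ε > (0:ℝ), boydH M (s * t) ≤ (A + ε) * (B + ε) := by
    intro ε hε
    have h1 : ∀ᶠ x in atTop, geninv M x / geninv M (s * x) < A + ε :=
      eventually_ratio_lt hM hs (by linarith)
    have h2' : ∀ᶠ x in atTop, geninv M x / geninv M (t * x) < B + ε :=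
      eventually_ratio_lt hM ht (by linarith)
    have hmul : Tendsto (fun x : ℝ => s * x) atTop atTop :=
      Tendsto.const_mul_atTop hs tendsto_id
    have h2 : ∀ᶠ x in atTop, geninv M (s*x) / geninv M (t * (s*x)) < B + ε :=
      hmul.eventually h2'
    apply boydH_le_of_eventually
    filter_upwards [h1, h2, eventually_gt_atTop (0:ℝ)] with x hx1 hx2 hx0
    have hgsx : geninv M (s * x) ≠ 0 := (geninv_pos hM (mul_pos hs hx0)).ne'
    have heq : geninv M x / geninv M ((s*t) * x)
        = (geninv M x / geninv M (s*x)) * (geninv M (s*x) / geninv M (t * (s*x))) := by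
      have h3 : t * (s * x) = (s * t) * x := by ring
      rw [h3]
      field_simp
    rw [heq]
    apply mul_le_mul hx1.le hx2.le (ratio_nonneg M t (s*x)) (by linarith)
  have htd : Tendsto (fun ε : ℝ => (A + ε) * (B + ε)) (𝓝[>] 0) (𝓝 (A * B)) := by
    have hc : Continuous (fun ε : ℝ => (A + ε) * (B + ε)) := by continuity
    have := (hc.tendsto 0).mono_left (nhdsWithin_le_nhds (s := Ioi (0:ℝ)))
    simpa using this
  exact ge_of_tendsto htd (by
    filter_upwards [self_mem_nhdsWithin] with ε (hε : 0 < ε) using key ε hε)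

lemma one_le_mul_boydH (hM : IsNFunction M) {t : ℝ} (ht : 0 < t) :
    1 ≤ boydH M t * boydH M t⁻¹ := by
  set A := boydH M t with hA
  set B := boydH M t⁻¹ with hB
  have hB0 : 0 < B := boydH_pos hM (inv_pos.2 ht)
  have key : ∀ ε > (0:ℝ), 1 ≤ (A + ε) * (B + ε) := by
    intro ε hε
    have h1 : ∀ᶠ x in atTop, geninv M x / geninv M (t * x) < A + ε :=
      eventually_ratio_lt hM ht (by linarith)
    have h2' : ∀ᶠ x in atTop, geninv M x / geninv M (t⁻¹ * x) < B + ε :=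
      eventually_ratio_lt hM (inv_pos.2 ht) (by linarith)
    have hmul : Tendsto (fun x : ℝ => t * x) atTop atTop :=
      Tendsto.const_mul_atTop ht tendsto_id
    have h2 : ∀ᶠ x in atTop, geninv M (t*x) / geninv M (t⁻¹ * (t*x)) < B + ε :=
      hmul.eventually h2'
    obtain ⟨x, hx1, hx2, hx0⟩ := (h1.and (h2.and (eventually_gt_atTop (0:ℝ)))).exists
    have hgx : geninv M x ≠ 0 := (geninv_pos hM hx0).ne'
    have hgtx : geninv M (t*x) ≠ 0 := (geninv_pos hM (mul_pos ht hx0)).ne'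
    have heq : (geninv M x / geninv M (t * x)) * (geninv M (t*x) / geninv M (t⁻¹ * (t*x))) = 1 := by
      have h3 : t⁻¹ * (t * x) = x := by field_simp
      rw [h3]
      field_simp
    calc (1:ℝ) = (geninv M x / geninv M (t * x)) * (geninv M (t*x) / geninv M (t⁻¹ * (t*x))) :=
          heq.symm
      _ ≤ (A + ε) * (B + ε) :=
          mul_le_mul hx1.le hx2.le (ratio_nonneg M t⁻¹ (t*x)) (by
            have := ratio_nonneg M t x; linarith)
  have htd : Tendsto (fun ε : ℝ => (A + ε) * (B + ε)) (𝓝[>] 0) (𝓝 (A * B)) := by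
    have hc : Continuous (fun ε : ℝ => (A + ε) * (B + ε)) := by continuity
    have := (hc.tendsto 0).mono_left (nhdsWithin_le_nhds (s := Ioi (0:ℝ)))
    simpa using this
  exact ge_of_tendsto htd (by
    filter_upwards [self_mem_nhdsWithin] with ε (hε : 0 < ε) using key ε hε)

lemma boydH_pow (hM : IsNFunction M) {t : ℝ} (ht : 0 < t) :
    ∀ n : ℕ, boydH M (t ^ (n+1)) ≤ (boydH M t) ^ (n+1) := by
  intro n
  induction n with
  | zero => simp
  | succ n ih =>
    have h1 : t ^ (n+2) = t ^ (n+1) * t := by ring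
    calc boydH M (t ^ (n+2)) = boydH M (t ^ (n+1) * t) := by rw [h1]
      _ ≤ boydH M (t ^ (n+1)) * boydH M t := boydH_submul hM (pow_pos ht _) ht
      _ ≤ (boydH M t) ^ (n+1) * boydH M t :=
          mul_le_mul_of_nonneg_right ih (boydH_pos hM ht).le
      _ = (boydH M t) ^ (n+2) := by ring

lemma compl_bddAbove (hM : IsNFunction M) (v : ℝ) :
    BddAbove ((fun u => u * |v| - M u) '' Set.Ici (0:ℝ)) := by
  obtain ⟨u₁, hu₁⟩ := (hM.2.2.2.2.eventually_ge_atTop (|v| + 1)).exists_forall_of_atTop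
  refine ⟨max 0 (max u₁ 1 * |v|), ?_⟩
  rintro y ⟨u, hu, rfl⟩
  have hu0 : (0:ℝ) ≤ u := hu
  rcases le_or_gt (max u₁ 1) u with h | h
  · have hup : 0 < u := lt_of_lt_of_le (lt_of_lt_of_le one_pos (le_max_right _ _)) h
    have := hu₁ u (le_trans (le_max_left _ _) h)
    have hMu : (|v| + 1) * u ≤ M u := by
      rw [le_div_iff₀ hup] at this
      exact this
    have : u * |v| - M u ≤ -u := by nlinarith
    calc u * |v| - M u ≤ -u := this
      _ ≤ 0 := by linarith
      _ ≤ max 0 (max u₁ 1 * |v|) := le_max_left _ _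
  · calc u * |v| - M u ≤ u * |v| := by
          have := nf_nonneg hM u; linarith
      _ ≤ max u₁ 1 * |v| := mul_le_mul_of_nonneg_right h.le (abs_nonneg v)
      _ ≤ max 0 (max u₁ 1 * |v|) := le_max_right _ _

lemma compl_le (hM : IsNFunction M) {v u : ℝ} (hu : 0 ≤ u) :
    u * |v| - M u ≤ complementaryN M v :=
  le_csSup (compl_bddAbove hM v) ⟨u, hu, rfl⟩

lemma compl_nonneg (hM : IsNFunction M) (v : ℝ) : 0 ≤ complementaryN M v := by
  have := compl_le hM (v := v) (le_refl (0:ℝ))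
  rw [nf_zero hM] at this
  simpa using this

lemma compl_young_self (hM : IsNFunction M) {u : ℝ} (hu : 0 < u) :
    complementaryN M (M u / u) ≤ M u := by
  apply csSup_le ((Set.nonempty_Ici).image _)
  rintro y ⟨w, hw, rfl⟩
  have hw0 : (0:ℝ) ≤ w := hw
  have habs : |M u / u| = M u / u := abs_of_nonneg (div_nonneg (nf_nonneg hM u) hu.le)
  rw [habs]
  rcases le_or_gt w u with h | h
  · have h1 : w * (M u / u) ≤ M u := by
      rw [mul_div_assoc'] at *
      rw [div_le_iff₀ hu]
      nlinarith [nf_nonneg hM u]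
    have := nf_nonneg hM w
    linarith
  · have h1 := nf_slope hM hu.le h.le (lt_trans hu h)
    have hww : 0 < w := lt_trans hu h
    have h3 : w * M u ≤ u * M w := by
      have h2 := mul_le_mul_of_nonneg_left h1 hww.le
      have he : w * (u / w * M w) = u * M w := by field_simp
      rw [he] at h2
      exact h2
    have h2 : w * (M u / u) ≤ M w := by
      rw [mul_div_assoc', div_le_iff₀ hu]
      nlinarith
    have := nf_nonneg hM u
    linarith

lemma nabla_delta2_compl {N : ℝ → ℝ} (hM : IsNFunction M)
    (hN : ∀ v, N v = complementaryN M v) {l u₀ : ℝ} (hl : 1 ≤ l) (hu₀ : 0 ≤ u₀)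
    (hnab : ∀ u ≥ u₀, 2*l*M u ≤ M (l*u)) : Delta2 N := by
  have hl0 : 0 < l := lt_of_lt_of_le one_pos hl
  refine ⟨2*l, by linarith, max (M (u₀+1)) 0, le_max_right _ _, ?_⟩
  intro v hv
  have hv0 : 0 ≤ v := le_trans (le_max_right _ _) hv
  have hMv : M (u₀+1) ≤ v := le_trans (le_max_left _ _) hv
  rw [hN, hN]
  have hNv_lb : u₀ * v ≤ complementaryN M v := by
    have h1 := compl_le hM (v := v) (u := u₀ + 1) (by linarith)
    rw [abs_of_nonneg hv0] at h1
    nlinarith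
  have hNv0 : 0 ≤ complementaryN M v := compl_nonneg hM v
  apply csSup_le ((Set.nonempty_Ici).image _)
  rintro y ⟨u, hu, rfl⟩
  have hu0 : (0:ℝ) ≤ u := hu
  have habs : |2*v| = 2*v := abs_of_nonneg (by linarith)
  rw [habs]
  rcases le_or_gt u (l*u₀) with h | h
  · calc u * (2*v) - M u ≤ u * (2*v) := by have := nf_nonneg hM u; linarith
      _ ≤ (l*u₀) * (2*v) := by nlinarith
      _ = 2*l*(u₀*v) := by ring
      _ ≤ 2*l*complementaryN M v := by nlinarith
  · set w := u / l with hwdef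
    have hw : u₀ ≤ w := by
      rw [hwdef, le_div_iff₀ hl0]
      nlinarith
    have hw0 : 0 ≤ w := le_trans hu₀ hw
    have hlw : l * w = u := by rw [hwdef]; field_simp
    have hnb := hnab w hw
    rw [hlw] at hnb
    have hwle : w * |v| - M w ≤ complementaryN M v := compl_le hM hw0
    rw [abs_of_nonneg hv0] at hwle
    have he : u * (2*v) = 2*l*w*v := by rw [← hlw]; ring
    calc u * (2*v) - M u ≤ 2*l*w*v - 2*l*M w := by
          rw [he]; linarith [hnb]
      _ = 2*l*(w*v - M w) := by ring
      _ ≤ 2*l*complementaryN M v := by nlinarith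

lemma delta2_compl_nabla {N : ℝ → ℝ} (hM : IsNFunction M)
    (hN : ∀ v, N v = complementaryN M v) (hD : Delta2 N) :
    ∃ l ≥ (1:ℝ), ∃ u₀ ≥ (0:ℝ), ∀ u ≥ u₀, 3*l*M u ≤ M (l*u) := by
  obtain ⟨k, hk0, v₀, hv₀, hk⟩ := hD
  set l := max (k^2) 1 with hldef
  have hl1 : 1 ≤ l := le_max_right _ _
  have hl0 : 0 < l := lt_of_lt_of_le one_pos hl1
  obtain ⟨u₁, hu₁⟩ := (hM.2.2.2.2.eventually_ge_atTop (max v₀ 1)).exists_forall_of_atTop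
  refine ⟨l, hl1, max u₁ 1, by positivity, ?_⟩
  intro u hu
  have hu1 : 1 ≤ u := le_trans (le_max_right _ _) hu
  have hu0 : 0 < u := lt_of_lt_of_le one_pos hu1
  set v := M u / u with hvdef
  have hv : max v₀ 1 ≤ v := hu₁ u (le_trans (le_max_left _ _) hu)
  have hv1 : 1 ≤ v := le_trans (le_max_right _ _) hv
  have hvv₀ : v₀ ≤ v := le_trans (le_max_left _ _) hv
  have hv0 : 0 < v := lt_of_lt_of_le one_pos hv1
  have hMu : M u = u * v := by rw [hvdef]; field_simp
  have hMu0 : 0 < M u := by rw [hMu]; positivity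
  have hNv : complementaryN M v ≤ M u := by
    rw [hvdef]; exact compl_young_self hM hu0
  have h2 : complementaryN M (2*v) ≤ k * complementaryN M v := by
    have := hk v hvv₀; rwa [hN, hN] at this
  have h4 : complementaryN M (2*(2*v)) ≤ k * complementaryN M (2*v) := by
    have := hk (2*v) (by linarith); rwa [hN, hN] at this
  have hN4 : complementaryN M (2*(2*v)) ≤ k^2 * M u := by
    calc complementaryN M (2*(2*v)) ≤ k * complementaryN M (2*v) := h4
      _ ≤ k * (k * complementaryN M v) := mul_le_mul_of_nonneg_left h2 hk0.le
      _ ≤ k * (k * M u) := by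
          apply mul_le_mul_of_nonneg_left _ hk0.le
          exact mul_le_mul_of_nonneg_left hNv hk0.le
      _ = k^2 * M u := by ring
  have hyoung := compl_le hM (v := 2*(2*v)) (u := l*u) (by positivity)
  have habs : |2*(2*v)| = 4*v := by
    rw [abs_of_nonneg (by linarith)]; ring
  rw [habs] at hyoung
  have hk2l : k^2 * M u ≤ l * M u :=
    mul_le_mul_of_nonneg_right (le_max_left _ _) hMu0.le
  have : (l*u) * (4*v) = 4*l*M u := by rw [hMu]; ring
  nlinarith [hyoung, hN4]


/-- From Δ₂ for `M`: a point `k > 1` with `h(k) ≤ 1/2`. -/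
lemma delta2_boydH (hM : IsNFunction M) (hD : Delta2 M) :
    ∃ k > (1:ℝ), boydH M k ≤ 1/2 := by
  obtain ⟨k, hk0, u₀, hu₀, hd⟩ := hD
  set k' := max k 2 with hk'def
  have hk'2 : (2:ℝ) ≤ k' := le_max_right _ _
  have hd' : ∀ u ≥ u₀, M (2*u) ≤ k' * M u := fun u hu =>
    le_trans (hd u hu) (mul_le_mul_of_nonneg_right (le_max_left _ _) (nf_nonneg hM u))
  refine ⟨k', by linarith, ?_⟩
  apply boydH_le_of_eventually
  filter_upwards [eventually_ge_atTop (max (M u₀) 1)] with x hx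
  have hx1 : (1:ℝ) ≤ x := le_trans (le_max_right _ _) hx
  have hx0 : 0 < x := lt_of_lt_of_le one_pos hx1
  set u := geninv M x with hudef
  have hu : M u = x := map_geninv hM hx0.le
  have huu₀ : u₀ ≤ u := le_geninv hM hu₀ (le_trans (le_max_left _ _) hx)
  have hup : 0 < u := geninv_pos hM hx0
  have h2u : M (2*u) ≤ k' * x := by rw [← hu]; exact hd' u huu₀
  have hge : 2*u ≤ geninv M (k'*x) := le_geninv hM (by linarith) h2u
  have hgp : 0 < geninv M (k'*x) := by linarith
  rw [div_le_iff₀ hgp]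
  linarith

/-- From a `boydH` bound at a single point `k > 1`: `0 < α`. -/
lemma alpha_pos (hM : IsNFunction M)
    (hB1 : Tendsto (fun t => -(Real.log (boydH M t)) / Real.log t) atTop (𝓝 α))
    {k : ℝ} (hk : 1 < k) (hH : boydH M k ≤ 1/2) : 0 < α := by
  have hk0 : 0 < k := lt_trans one_pos hk
  have hlogk : 0 < Real.log k := Real.log_pos hk
  have hδ : 0 < Real.log 2 / Real.log k := div_pos (Real.log_pos one_lt_two) hlogk
  have hseq : Tendsto (fun n : ℕ => k ^ (n+1)) atTop atTop := by
    have h1 := tendsto_pow_atTop_atTop_of_one_lt (α := ℝ) hk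
    exact h1.comp (tendsto_add_atTop_nat 1)
  have hcomp : Tendsto (fun n : ℕ => -(Real.log (boydH M (k ^ (n+1)))) / Real.log (k ^ (n+1)))
      atTop (𝓝 α) := hB1.comp hseq
  have hbound : ∀ n : ℕ, Real.log 2 / Real.log k
      ≤ -(Real.log (boydH M (k ^ (n+1)))) / Real.log (k ^ (n+1)) := by
    intro n
    have hpos : 0 < boydH M (k ^ (n+1)) := boydH_pos hM (pow_pos hk0 _)
    have hpow : boydH M (k ^ (n+1)) ≤ (1/2 : ℝ) ^ (n+1) := by
      calc boydH M (k ^ (n+1)) ≤ (boydH M k) ^ (n+1) := boydH_pow hM hk0 n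
        _ ≤ (1/2 : ℝ) ^ (n+1) :=
            pow_le_pow_left₀ (boydH_pos hM hk0).le hH _
    have hlog : Real.log (boydH M (k ^ (n+1))) ≤ -((n+1 : ℕ) * Real.log 2) := by
      calc Real.log (boydH M (k ^ (n+1))) ≤ Real.log ((1/2 : ℝ) ^ (n+1)) :=
            Real.log_le_log hpos hpow
        _ = (n+1 : ℕ) * Real.log (1/2) := by rw [Real.log_pow]
        _ = -((n+1 : ℕ) * Real.log 2) := by
            rw [one_div, Real.log_inv]; ring
    have hlogt : Real.log (k ^ (n+1)) = (n+1 : ℕ) * Real.log k := by rw [Real.log_pow]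
    rw [hlogt, div_le_div_iff₀ hlogk (by positivity)]
    have hn1 : (0:ℝ) < (n+1 : ℕ) := by positivity
    nlinarith [Real.log_pos one_lt_two]
  calc 0 < Real.log 2 / Real.log k := hδ
    _ ≤ α := ge_of_tendsto' hcomp hbound

/-- From a `boydH` bound at a single point `t < 1`: `β ≤ log c / log t⁻¹`. -/
lemma beta_le (hM : IsNFunction M)
    (hB2 : Tendsto (fun t => -(Real.log (boydH M t)) / Real.log t) (𝓝[>] (0:ℝ)) (𝓝 β))
    {t c : ℝ} (ht0 : 0 < t) (ht1 : t < 1) (hc : 1 ≤ c) (hH : boydH M t ≤ c) :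
    β ≤ Real.log c / Real.log t⁻¹ := by
  have hlogt : Real.log t < 0 := Real.log_neg ht0 ht1
  have hD : 0 < -Real.log t := by linarith
  have hseq : Tendsto (fun n : ℕ => t ^ (n+1)) atTop (𝓝[>] (0:ℝ)) := by
    rw [tendsto_nhdsWithin_iff]
    constructor
    · have h1 := tendsto_pow_atTop_nhds_zero_of_lt_one ht0.le ht1
      exact h1.comp (tendsto_add_atTop_nat 1)
    · exact Eventually.of_forall (fun n => pow_pos ht0 _)
  have hcomp : Tendsto (fun n : ℕ => -(Real.log (boydH M (t ^ (n+1)))) / Real.log (t ^ (n+1)))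
      atTop (𝓝 β) := hB2.comp hseq
  have hbound : ∀ n : ℕ, -(Real.log (boydH M (t ^ (n+1)))) / Real.log (t ^ (n+1))
      ≤ Real.log c / Real.log t⁻¹ := by
    intro n
    have htn : (0:ℝ) < t ^ (n+1) := pow_pos ht0 _
    have hpos : 0 < boydH M (t ^ (n+1)) := boydH_pos hM htn
    have hone : 1 ≤ boydH M (t ^ (n+1)) := by
      have hmin := min_le_boydH hM htn
      have hti : 1 ≤ (t ^ (n+1))⁻¹ := by
        apply (one_le_inv₀ htn).2
        calc t^(n+1) ≤ 1^(n+1) := pow_le_pow_left₀ ht0.le ht1.le _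
          _ = 1 := one_pow _
      rwa [min_eq_left hti] at hmin
    have hL0 : 0 ≤ Real.log (boydH M (t ^ (n+1))) := Real.log_nonneg hone
    have hLle : Real.log (boydH M (t ^ (n+1))) ≤ (n+1 : ℕ) * Real.log c := by
      calc Real.log (boydH M (t ^ (n+1))) ≤ Real.log (c ^ (n+1)) := by
            apply Real.log_le_log hpos
            calc boydH M (t ^ (n+1)) ≤ (boydH M t) ^ (n+1) := boydH_pow hM ht0 n
              _ ≤ c ^ (n+1) := pow_le_pow_left₀ (boydH_pos hM ht0).le hH _
        _ = (n+1 : ℕ) * Real.log c := by rw [Real.log_pow]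
    have hlogtn : Real.log (t ^ (n+1)) = (n+1 : ℕ) * Real.log t := by rw [Real.log_pow]
    have hn1 : (0:ℝ) < (n+1 : ℕ) := by positivity
    have he : ((n+1 : ℕ) : ℝ) * Real.log t = -(((n+1 : ℕ) : ℝ) * (-Real.log t)) := by ring
    rw [hlogtn, Real.log_inv, he, neg_div_neg_eq]
    rw [div_le_div_iff₀ (mul_pos hn1 hD) hD]
    have hlc : 0 ≤ Real.log c := Real.log_nonneg hc
    nlinarith [mul_le_mul_of_nonneg_right hLle hD.le]
  exact le_of_tendsto' hcomp hbound

/-- `α ≤ β`. -/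
lemma alpha_le_beta (hM : IsNFunction M) {α β : ℝ} (hB : HasBoydIndices M α β) : α ≤ β := by
  have hinv : Tendsto (fun t : ℝ => t⁻¹) atTop (𝓝[>] (0:ℝ)) := by
    rw [tendsto_nhdsWithin_iff]
    exact ⟨tendsto_inv_atTop_zero,
      by filter_upwards [eventually_gt_atTop 0] with x hx using inv_pos.2 hx⟩
  have hgb : Tendsto (fun t : ℝ => -(Real.log (boydH M t⁻¹)) / Real.log t⁻¹) atTop (𝓝 β) :=
    hB.2.comp hinv
  apply le_of_tendsto_of_tendsto hB.1 hgb
  filter_upwards [eventually_gt_atTop (1:ℝ)] with t ht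
  have ht0 : 0 < t := lt_trans one_pos ht
  have hlogt : 0 < Real.log t := Real.log_pos ht
  have hA : 0 < boydH M t := boydH_pos hM ht0
  have hBt : 0 < boydH M t⁻¹ := boydH_pos hM (inv_pos.2 ht0)
  have hmul := one_le_mul_boydH hM ht0
  have hlog : 0 ≤ Real.log (boydH M t) + Real.log (boydH M t⁻¹) := by
    have h1 : Real.log 1 ≤ Real.log (boydH M t * boydH M t⁻¹) :=
      Real.log_le_log one_pos hmul
    rwa [Real.log_one, Real.log_mul hA.ne' hBt.ne'] at h1
  show -(Real.log (boydH M t)) / Real.log t ≤ -(Real.log (boydH M t⁻¹)) / Real.log t⁻¹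
  rw [Real.log_inv, neg_div_neg_eq]
  rw [div_le_div_iff₀ hlogt hlogt]
  nlinarith


/-- From the ∇₂-type condition `3l·M(u) ≤ M(l·u)`: `h((3l)⁻¹) ≤ l`. -/
lemma nabla_boydH (hM : IsNFunction M) {l u₀ : ℝ} (hl : 1 ≤ l) (hu₀ : 0 ≤ u₀)
    (hnab : ∀ u ≥ u₀, 3*l*M u ≤ M (l*u)) : boydH M (3*l)⁻¹ ≤ l := by
  have hl0 : 0 < l := lt_of_lt_of_le one_pos hl
  have h3l : 0 < 3*l := by linarith
  apply boydH_le_of_eventually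
  filter_upwards [eventually_ge_atTop (max (3*l*(M u₀ + 1)) 1)] with x hx
  have hx1 : (1:ℝ) ≤ x := le_trans (le_max_right _ _) hx
  have hx0 : 0 < x := lt_of_lt_of_le one_pos hx1
  set s := (3*l)⁻¹ * x with hsdef
  have hs0 : 0 < s := by positivity
  set u := geninv M s with hudef
  have hMu : M u = s := map_geninv hM hs0.le
  have hsu₀ : M u₀ ≤ s := by
    have h1 : 3*l*(M u₀ + 1) ≤ x := le_trans (le_max_left _ _) hx
    rw [hsdef, ← div_eq_inv_mul, le_div_iff₀ h3l]
    nlinarith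
  have huu₀ : u₀ ≤ u := le_geninv hM hu₀ hsu₀
  have hup : 0 < u := geninv_pos hM hs0
  have hnb := hnab u huu₀
  have hxle : x ≤ M (l*u) := by
    rw [hMu, hsdef] at hnb
    calc x = 3*l*((3*l)⁻¹ * x) := by field_simp
      _ ≤ M (l*u) := hnb
  have hge : geninv M x ≤ l*u := geninv_le hM (by positivity) hx0 hxle
  rw [div_le_iff₀ hup]
  exact hge

/-- Reverse direction for `M`: from a point `t > 1` with `h(t) < 1`, `Δ₂` for `M`. -/
lemma boydH_delta2 (hM : IsNFunction M) {t : ℝ} (ht : 1 < t) (hH : boydH M t < 1) :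
    Delta2 M := by
  have ht0 : 0 < t := lt_trans one_pos ht
  set c := (boydH M t + 1)/2 with hcdef
  have hc0 : 0 < c := by have := boydH_pos hM ht0; rw [hcdef]; linarith
  have hc1 : c < 1 := by rw [hcdef]; linarith
  have hcb : boydH M t < c := by rw [hcdef]; linarith
  obtain ⟨x₀, hx₀⟩ := (eventually_ratio_lt hM ht0 hcb).exists_forall_of_atTop
  set x₁ := max x₀ 1 with hx₁def
  have hx₁1 : (1:ℝ) ≤ x₁ := le_max_right _ _
  have hstep : ∀ x ≥ x₁, geninv M x ≤ c * geninv M (t*x) := by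
    intro x hx
    have hx0 : 0 < x := lt_of_lt_of_le one_pos (le_trans hx₁1 hx)
    have hgp : 0 < geninv M (t*x) := geninv_pos hM (by positivity)
    have := hx₀ x (le_trans (le_max_left _ _) hx)
    rw [div_lt_iff₀ hgp] at this
    linarith
  have hiter : ∀ n : ℕ, ∀ x ≥ x₁, geninv M x ≤ c^n * geninv M (t^n * x) := by
    intro n
    induction n with
    | zero => intro x hx; simp
    | succ n ih =>
      intro x hx
      have hx0 : 0 < x := lt_of_lt_of_le one_pos (le_trans hx₁1 hx)
      have htx : t*x ≥ x₁ := le_trans hx (le_mul_of_one_le_left hx0.le ht.le)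
      calc geninv M x ≤ c * geninv M (t*x) := hstep x hx
        _ ≤ c * (c^n * geninv M (t^n * (t*x))) :=
            mul_le_mul_of_nonneg_left (ih (t*x) htx) hc0.le
        _ = c^(n+1) * geninv M (t^(n+1) * x) := by
            have he : t^n * (t*x) = t^(n+1) * x := by ring
            rw [he]; ring
  obtain ⟨n, hn⟩ := exists_pow_lt_of_lt_one (show (0:ℝ) < 1/2 by norm_num) hc1
  obtain ⟨u₁, hu₁⟩ := ((nf_tendsto hM).eventually_ge_atTop x₁).exists_forall_of_atTop
  refine ⟨t^n, pow_pos ht0 n, max u₁ 0, le_max_right _ _, ?_⟩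
  intro u hu
  have hu0 : 0 ≤ u := le_trans (le_max_right _ _) hu
  have hMux : x₁ ≤ M u := hu₁ u (le_trans (le_max_left _ _) hu)
  have hMu0 : 0 < M u := lt_of_lt_of_le one_pos (le_trans hx₁1 hMux)
  have hgu : geninv M (M u) = u := geninv_map hM hu0 hMu0
  have h1 : u ≤ c^n * geninv M (t^n * M u) := by
    have := hiter n (M u) hMux
    rwa [hgu] at this
  have h2 : c^n * geninv M (t^n * M u) ≤ (1/2) * geninv M (t^n * M u) :=
    mul_le_mul_of_nonneg_right hn.le (geninv_nonneg M _)
  have h3 : 2*u ≤ geninv M (t^n * M u) := by linarith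
  calc M (2*u) ≤ M (geninv M (t^n * M u)) := nf_mono hM (by linarith) h3
    _ = t^n * M u := map_geninv hM (by positivity)

/-- Reverse direction for `N`: from a point `t < 1` with `h(t) < 1/t`, the ∇₂ condition. -/
lemma boydH_nabla (hM : IsNFunction M) {t : ℝ} (ht0 : 0 < t) (ht1 : t < 1)
    (hH : boydH M t < t⁻¹) :
    ∃ l ≥ (1:ℝ), ∃ u₀ ≥ (0:ℝ), ∀ u ≥ u₀, 2*l*M u ≤ M (l*u) := by
  have hti : 1 ≤ t⁻¹ := (one_le_inv₀ ht0).2 ht1.le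
  have hA1 : 1 ≤ boydH M t := by
    have := min_le_boydH hM ht0
    rwa [min_eq_left hti] at this
  set c := (boydH M t + t⁻¹)/2 with hcdef
  have hc1 : 1 ≤ c := by rw [hcdef]; linarith
  have hc0 : 0 < c := lt_of_lt_of_le one_pos hc1
  have hcti : c < t⁻¹ := by rw [hcdef]; linarith
  have hct : c * t < 1 := by
    have := (mul_lt_mul_of_pos_right hcti ht0)
    rwa [inv_mul_cancel₀ ht0.ne'] at this
  have hcb : boydH M t < c := by rw [hcdef]; linarith
  obtain ⟨x₀, hx₀⟩ := (eventually_ratio_lt hM ht0 hcb).exists_forall_of_atTop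
  set x₁ := max x₀ 1 with hx₁def
  have hx₁1 : (1:ℝ) ≤ x₁ := le_max_right _ _
  have hstep : ∀ x ≥ x₁, geninv M x ≤ c * geninv M (t*x) := by
    intro x hx
    have hx0 : 0 < x := lt_of_lt_of_le one_pos (le_trans hx₁1 hx)
    have hgp : 0 < geninv M (t*x) := geninv_pos hM (by positivity)
    have := hx₀ x (le_trans (le_max_left _ _) hx)
    rw [div_lt_iff₀ hgp] at this
    linarith
  have hiter : ∀ n : ℕ, ∀ y ≥ x₁, geninv M (y / t^n) ≤ c^n * geninv M y := by
    intro n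
    induction n with
    | zero => intro y hy; simp
    | succ n ih =>
      intro y hy
      have hy0 : 0 < y := lt_of_lt_of_le one_pos (le_trans hx₁1 hy)
      have hyt : y/t ≥ x₁ := by
        calc x₁ ≤ y := hy
          _ ≤ y/t := by rw [le_div_iff₀ ht0]; nlinarith
      have he : y / t^(n+1) = (y/t) / t^n := by
        rw [div_div]
        congr 1
        ring
      rw [he]
      calc geninv M ((y/t) / t^n) ≤ c^n * geninv M (y/t) := ih (y/t) hyt
        _ ≤ c^n * (c * geninv M (t*(y/t))) :=
            mul_le_mul_of_nonneg_left (hstep (y/t) hyt) (by positivity)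
        _ = c^(n+1) * geninv M y := by
            have he2 : t*(y/t) = y := by field_simp
            rw [he2]; ring
  obtain ⟨n, hn⟩ := exists_pow_lt_of_lt_one (show (0:ℝ) < 1/2 by norm_num) hct
  have hctn : c^n * t^n < 1/2 := by rwa [← mul_pow]
  obtain ⟨u₁, hu₁⟩ := ((nf_tendsto hM).eventually_ge_atTop x₁).exists_forall_of_atTop
  refine ⟨c^n, one_le_pow₀ hc1, max u₁ 0, le_max_right _ _, ?_⟩
  intro u hu
  have hu0 : 0 ≤ u := le_trans (le_max_right _ _) hu
  have hMux : x₁ ≤ M u := hu₁ u (le_trans (le_max_left _ _) hu)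
  have hMu0 : 0 < M u := lt_of_lt_of_le one_pos (le_trans hx₁1 hMux)
  have hgu : geninv M (M u) = u := geninv_map hM hu0 hMu0
  have htn : 0 < t^n := pow_pos ht0 n
  have hcn : 0 < c^n := pow_pos hc0 n
  have h1 : geninv M (M u / t^n) ≤ c^n * u := by
    have := hiter n (M u) hMux
    rwa [hgu] at this
  have h2 : M u / t^n ≤ M (c^n * u) := by
    calc M u / t^n = M (geninv M (M u / t^n)) := (map_geninv hM (by positivity)).symm
      _ ≤ M (c^n * u) := nf_mono hM (geninv_nonneg M _) h1
  have h3 : 2*(c^n)*M u ≤ M u / t^n := by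
    rw [le_div_iff₀ htn]
    nlinarith
  linarith

end BoydAux

open BoydAux in
/-- `M, N ∈ Δ₂` iff the Boyd indices satisfy `0 < α_M ≤ β_M < 1`. -/
theorem delta2_iff_boyd_indices
    (M N : ℝ → ℝ) (hM : IsNFunction M) (hN : ∀ v, N v = complementaryN M v)
    (α β : ℝ) (hB : HasBoydIndices M α β) :
    (Delta2 M ∧ Delta2 N) ↔ (0 < α ∧ α ≤ β ∧ β < 1) := by
  constructor
  · rintro ⟨hDM, hDN⟩
    obtain ⟨k, hk, hHk⟩ := delta2_boydH hM hDM
    have hα : 0 < α := alpha_pos hM hB.1 hk hHk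
    obtain ⟨l, hl, u₀, hu₀, hnab⟩ := delta2_compl_nabla hM hN hDN
    have hHl : boydH M (3*l)⁻¹ ≤ l := nabla_boydH hM hl hu₀ hnab
    have h3l1 : 1 < 3*l := by linarith
    have ht0 : 0 < (3*l)⁻¹ := by positivity
    have ht1 : (3*l)⁻¹ < 1 := (inv_lt_one₀ (by linarith)).2 h3l1
    have hβ' : β ≤ Real.log l / Real.log ((3*l)⁻¹)⁻¹ := beta_le hM hB.2 ht0 ht1 hl hHl
    rw [inv_inv] at hβ'
    have hβ : β < 1 := by
      apply lt_of_le_of_lt hβ'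
      rw [div_lt_one (Real.log_pos h3l1)]
      exact Real.log_lt_log (lt_of_lt_of_le one_pos hl) (by linarith)
    exact ⟨hα, alpha_le_beta hM hB, hβ⟩
  · rintro ⟨hα, hαβ, hβ⟩
    constructor
    · obtain ⟨t, ht1, hgt⟩ :=
        ((hB.1.eventually_const_lt hα).and (eventually_gt_atTop (1:ℝ))).exists
      have ht0 : 0 < t := lt_trans one_pos hgt
      have hA : 0 < boydH M t := boydH_pos hM ht0
      have hlogt : 0 < Real.log t := Real.log_pos hgt
      have hnum : 0 < -(Real.log (boydH M t)) := by
        by_contra h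
        push_neg at h
        have hle : -(Real.log (boydH M t)) / Real.log t ≤ 0 :=
          div_nonpos_of_nonpos_of_nonneg h hlogt.le
        linarith
      have hH : boydH M t < 1 := (Real.log_neg_iff hA).1 (by linarith)
      exact boydH_delta2 hM hgt hH
    · have hd : β < (β+1)/2 := by linarith
      have hd1 : (β+1)/2 < 1 := by linarith
      obtain ⟨t, h1, h2, h3⟩ := ((hB.2.eventually_lt_const hd).and
        ((eventually_nhdsWithin_of_eventually_nhds (eventually_lt_nhds one_pos)).and
          self_mem_nhdsWithin)).exists
      have ht0 : 0 < t := h3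
      have hlogt : Real.log t < 0 := Real.log_neg ht0 h2
      have hga : -(Real.log (boydH M t)) / Real.log t < 1 := lt_trans h1 hd1
      have hnl : Real.log t < -(Real.log (boydH M t)) := (div_lt_one_of_neg hlogt).1 hga
      have hApos : 0 < boydH M t := boydH_pos hM ht0
      have hH : boydH M t < t⁻¹ := by
        have hlog2 : Real.log (boydH M t) < Real.log t⁻¹ := by
          rw [Real.log_inv]; linarith
        exact (Real.log_lt_log_iff hApos (inv_pos.2 ht0)).1 hlog2
      obtain ⟨l, hl, u₀, hu₀, hnab⟩ := boydH_nabla hM ht0 h2 hH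
      exact nabla_delta2_compl hM hN hl hu₀ hnab


end
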